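/- If G is a connected graph of order n ≥ 3 with α₁(G) = n − 1, then G is isomorphic to the broom B³_n or to the unicyclic graph U_{1,n-1}. -/

import Mathlib

/-!
A set of `n - 1` vertices inducing exactly one edge is the complement of a single vertex `v`,
so `G - v` has a single edge `xy`. In a connected graph every other vertex, having no neighbour
but `v`, is a pendant vertex at `v`, and `v` is adjacent to `x` or to `y`. Such a graph is
determined up to isomorphism by which of `x`, `y` are adjacent to `v`: both gives `U_{1,n-1}`,
exactly one gives `B³ₙ`.
-/

/-- The 1-nearly vertex independence number: the maximum cardinality of a set of
vertices whose induced subgraph has exactly one edge (0 if none exists). -/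
noncomputable def alpha1 {V : Type*} (G : SimpleGraph V) : ℕ :=
  sSup {k : ℕ | ∃ s : Set V, s.ncard = k ∧ {e ∈ G.edgeSet | ∀ v ∈ e, v ∈ s}.ncard = 1}

/-- The graph obtained from the star K_{1,n-1} (center 0) by adding the edge
between the leaves 1 and 2. -/
def unicyclicStar (n : ℕ) : SimpleGraph (Fin n) where
  Adj i j := i ≠ j ∧ (i.val = 0 ∨ j.val = 0 ∨
    ((i.val = 1 ∨ i.val = 2) ∧ (j.val = 1 ∨ j.val = 2)))
  symm := ⟨by rintro i j ⟨h1, h2⟩; exact ⟨h1.symm, by tauto⟩⟩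
  loopless := ⟨by rintro i ⟨h1, _⟩; exact h1 rfl⟩

/-- The broom B³ₙ: the path 0-1-2 together with n-3 pendant leaves attached to
the end-vertex 0. -/
def broom3 (n : ℕ) : SimpleGraph (Fin n) where
  Adj i j := i ≠ j ∧ ((i.val = 0 ∧ j.val = 1) ∨ (i.val = 1 ∧ j.val = 0) ∨
    (i.val = 1 ∧ j.val = 2) ∨ (i.val = 2 ∧ j.val = 1) ∨
    (i.val = 0 ∧ 3 ≤ j.val) ∨ (j.val = 0 ∧ 3 ≤ i.val))
  symm := ⟨by rintro i j ⟨h1, h2⟩; exact ⟨h1.symm, by tauto⟩⟩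
  loopless := ⟨by rintro i ⟨h1, _⟩; exact h1 rfl⟩

namespace SimpleGraph

variable {V : Type*} {G H : SimpleGraph V} {v x y : V}

theorem exists_ncard_eq_alpha1 [Finite V] (h : alpha1 G ≠ 0) :
    ∃ s : Set V, s.ncard = alpha1 G ∧ {e ∈ G.edgeSet | ∀ v ∈ e, v ∈ s}.ncard = 1 := by
  set A := {k : ℕ | ∃ s : Set V, s.ncard = k ∧ {e ∈ G.edgeSet | ∀ v ∈ e, v ∈ s}.ncard = 1}
  have hA : A.Nonempty := Set.nonempty_iff_ne_empty.mpr fun hA =>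
    h (show sSup A = 0 by rw [hA, csSup_empty, Nat.bot_eq_zero])
  exact Nat.sSup_mem hA ⟨Nat.card V, by rintro _ ⟨s, rfl, -⟩; exact Set.ncard_le_card s⟩

theorem exists_single_edge_avoiding_of_alpha1_eq (hV : 2 ≤ Nat.card V)
    (ha : alpha1 G = Nat.card V - 1) :
    ∃ v x y, x ≠ v ∧ y ≠ v ∧ G.Adj x y ∧
      ∀ ⦃a b⦄, G.Adj a b → a ≠ v → b ≠ v → s(a, b) = s(x, y) := by
  have : Finite V := Nat.finite_of_card_ne_zero (by omega)
  obtain ⟨s, hs, hedge⟩ := exists_ncard_eq_alpha1 (G := G) (by omega)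
  obtain ⟨v, hv⟩ : ∃ v, sᶜ = {v} := Set.ncard_eq_one.mp (by rw [Set.ncard_compl]; omega)
  have hmem : ∀ a, a ∈ s ↔ a ≠ v := fun a => by
    rw [← Set.notMem_compl_iff, hv, Set.mem_singleton_iff]
  obtain ⟨e, he⟩ := Set.ncard_eq_one.mp hedge
  induction e using Sym2.ind with
  | _ x y =>
  have hxy : s(x, y) ∈ {e ∈ G.edgeSet | ∀ v ∈ e, v ∈ s} := he ▸ rfl
  refine ⟨v, x, y, (hmem x).mp (hxy.2 x (Sym2.mem_mk_left x y)),
    (hmem y).mp (hxy.2 y (Sym2.mem_mk_right x y)), hxy.1, fun a b hab hav hbv => ?_⟩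
  have hab' : s(a, b) ∈ {e ∈ G.edgeSet | ∀ v ∈ e, v ∈ s} := by
    refine ⟨hab, fun w hw => ?_⟩
    rcases Sym2.mem_iff.mp hw with rfl | rfl
    exacts [(hmem w).mpr hav, (hmem w).mpr hbv]
  rwa [he, Set.mem_singleton_iff] at hab'

/-- The common shape of `broom3` and `unicyclicStar`, with `v`, `x`, `y` in the roles of
`0`, `1`, `2`. -/
structure IsCentredAt (G : SimpleGraph V) (v x y : V) : Prop where
  left_ne : x ≠ v
  right_ne : y ≠ v
  adj : G.Adj x y
  eq_of_adj : ∀ ⦃a b⦄, G.Adj a b → a ≠ v → b ≠ v → s(a, b) = s(x, y)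
  adj_centre : ∀ ⦃u⦄, u ≠ v → u ≠ x → u ≠ y → G.Adj v u

theorem Connected.exists_isCentredAt_of_alpha1_eq (hc : G.Connected) (hV : 2 ≤ Nat.card V)
    (ha : alpha1 G = Nat.card V - 1) : ∃ v x y, G.IsCentredAt v x y := by
  obtain ⟨v, x, y, hxv, hyv, hxy, heq⟩ := exists_single_edge_avoiding_of_alpha1_eq hV ha
  refine ⟨v, x, y, hxv, hyv, hxy, heq, fun u huv hux huy => ?_⟩
  have : Nontrivial V := ⟨⟨u, v, huv⟩⟩
  obtain ⟨w, huw⟩ := hc.preconnected.exists_adj_of_nontrivial u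
  by_cases hwv : w = v
  · exact hwv ▸ huw.symm
  · rcases Sym2.eq_iff.mp (heq huw huv hwv) with ⟨rfl, -⟩ | ⟨rfl, -⟩ <;> contradiction

namespace IsCentredAt

theorem symm (h : G.IsCentredAt v x y) : G.IsCentredAt v y x where
  left_ne := h.right_ne
  right_ne := h.left_ne
  adj := h.adj.symm
  eq_of_adj _ _ hab hav hbv := (h.eq_of_adj hab hav hbv).trans Sym2.eq_swap
  adj_centre _ huv huy hux := h.adj_centre huv hux huy

theorem adj_left_or_adj_right (h : G.IsCentredAt v x y) (hc : G.Connected) :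
    G.Adj v x ∨ G.Adj v y := by
  by_contra! hv
  obtain ⟨d, -, hd, hd'⟩ := (hc.preconnected x v).some.exists_boundary_dart {x, y}
    (Set.mem_insert x _) (by simp [h.left_ne.symm, h.right_ne.symm])
  by_cases hdv : d.snd = v
  · rcases hd with hd | hd <;> rw [← hd, ← hdv] at hv
    exacts [hv.1 d.adj.symm, hv.2 d.adj.symm]
  · have hfst : d.fst ≠ v := by
      rcases hd with hd | hd <;> rw [hd]
      exacts [h.left_ne, h.right_ne]
    have hmem : d.snd ∈ s(x, y) := h.eq_of_adj d.adj hfst hdv ▸ Sym2.mem_mk_right _ _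
    exact hd' (Sym2.mem_iff.mp hmem)

theorem le (hG : G.IsCentredAt v x y) (hH : H.IsCentredAt v x y)
    (hx : G.Adj v x → H.Adj v x) (hy : G.Adj v y → H.Adj v y) : G ≤ H := by
  have hcentre : ∀ u, G.Adj v u → H.Adj v u := by
    intro u hu
    by_cases hux : u = x
    · exact hux ▸ hx (hux ▸ hu)
    by_cases huy : u = y
    · exact huy ▸ hy (huy ▸ hu)
    exact hH.adj_centre hu.ne.symm hux huy
  intro a b hab
  by_cases hav : a = v
  · exact hav ▸ hcentre b (hav ▸ hab)
  by_cases hbv : b = v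
  · exact hbv ▸ (hcentre a (hbv ▸ hab.symm)).symm
  rw [← mem_edgeSet, hG.eq_of_adj hab hav hbv]
  exact hH.adj

theorem eq (hG : G.IsCentredAt v x y) (hH : H.IsCentredAt v x y)
    (hx : G.Adj v x ↔ H.Adj v x) (hy : G.Adj v y ↔ H.Adj v y) : G = H :=
  le_antisymm (hG.le hH hx.mp hy.mp) (hH.le hG hx.mpr hy.mpr)

theorem comap {W : Type*} {H : SimpleGraph W} (e : V ≃ W)
    (h : H.IsCentredAt (e v) (e x) (e y)) : (H.comap e).IsCentredAt v x y where
  left_ne := e.injective.ne_iff.mp h.left_ne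
  right_ne := e.injective.ne_iff.mp h.right_ne
  adj := h.adj
  eq_of_adj a b hab hav hbv := by
    have := h.eq_of_adj hab (e.injective.ne hav) (e.injective.ne hbv)
    exact Sym2.map.injective e.injective (by simpa using this)
  adj_centre u huv hux huy :=
    h.adj_centre (e.injective.ne huv) (e.injective.ne hux) (e.injective.ne huy)

theorem nonempty_iso {v' x' y' : V} (hG : G.IsCentredAt v x y)
    (hH : H.IsCentredAt v' x' y') (hx : G.Adj v x ↔ H.Adj v' x')
    (hy : G.Adj v y ↔ H.Adj v' y') : Nonempty (G ≃g H) := by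
  have hinj {a b c : V} (hb : b ≠ a) (hc : c ≠ a) (hbc : b ≠ c) :
      Function.Injective ![a, b, c] := by
    intro i j hij
    fin_cases i <;> fin_cases j <;> simp_all [eq_comm]
  obtain ⟨e, he⟩ := Equiv.Perm.exists_extending_pair ![v, x, y] ![v', x', y']
    (hinj hG.left_ne hG.right_ne hG.adj.ne)
    (hinj hH.left_ne hH.right_ne hH.adj.ne)
  have hv : e v = v' := he 0
  have hx' : e x = x' := he 1
  have hy' : e y = y' := he 2
  subst hv hx' hy'
  rw [hG.eq (hH.comap e) hx hy]
  exact ⟨Iso.comap e H⟩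

end IsCentredAt

end SimpleGraph

theorem broom3_isCentredAt {n : ℕ} (hn : 3 ≤ n) :
    (broom3 n).IsCentredAt ⟨0, by omega⟩ ⟨1, by omega⟩ ⟨2, by omega⟩ where
  left_ne := by simp [Fin.ext_iff]
  right_ne := by simp [Fin.ext_iff]
  adj := by simp [broom3]
  eq_of_adj a b hab ha hb := by
    simp only [broom3, ne_eq, Fin.ext_iff, Sym2.eq_iff] at hab ha hb ⊢
    omega
  adj_centre u hu0 hu1 hu2 := by
    simp only [broom3, ne_eq, Fin.ext_iff, true_and] at hu0 hu1 hu2 ⊢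
    omega

theorem unicyclicStar_isCentredAt {n : ℕ} (hn : 3 ≤ n) :
    (unicyclicStar n).IsCentredAt ⟨0, by omega⟩ ⟨1, by omega⟩ ⟨2, by omega⟩ where
  left_ne := by simp [Fin.ext_iff]
  right_ne := by simp [Fin.ext_iff]
  adj := by simp [unicyclicStar]
  eq_of_adj a b hab ha hb := by
    simp only [unicyclicStar, ne_eq, Fin.ext_iff, Sym2.eq_iff] at hab ha hb ⊢
    omega
  adj_centre _ hu0 _ _ := ⟨hu0.symm, .inl rfl⟩

theorem alpha1_max_connected_characterisation (n : ℕ) (hn : 3 ≤ n)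
    (G : SimpleGraph (Fin n)) (hc : G.Connected) (ha : alpha1 G = n - 1) :
    Nonempty (G ≃g broom3 n) ∨ Nonempty (G ≃g unicyclicStar n) := by
  obtain ⟨v, x, y, hG⟩ :=
    hc.exists_isCentredAt_of_alpha1_eq (by rw [Nat.card_fin]; omega)
      (by rwa [Nat.card_fin])
  have hB := broom3_isCentredAt hn
  have hU := unicyclicStar_isCentredAt hn
  by_cases hvx : G.Adj v x <;> by_cases hvy : G.Adj v y
  · exact .inr (hG.nonempty_iso hU (iff_of_true hvx (by simp [unicyclicStar]))
      (iff_of_true hvy (by simp [unicyclicStar])))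
  · exact .inl (hG.nonempty_iso hB (iff_of_true hvx (by simp [broom3]))
      (iff_of_false hvy (by simp [broom3])))
  · exact .inl (hG.symm.nonempty_iso hB (iff_of_true hvy (by simp [broom3]))
      (iff_of_false hvx (by simp [broom3])))
  · exact ((hG.adj_left_or_adj_right hc).elim hvx hvy).elim
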